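/- Let R be the ring of integers of a number field (or any Dedekind domain), and let (f, 𝔣) be a nonzero pseudo-polynomial. Write f = Σ_i c_{α_i} x^{α_i} with c_{α_i} ≠ 0. Suppose g = Σ_i c̄_{α_i} x^{α_i} ∈ R[x] and 𝔑 is a fractional ideal of R with c_{α_i} − c̄_{α_i} ∈ 𝔑𝔣⁻¹ for all i. Then (f, 𝔣) reduces to 0 modulo {(g, 𝔣), (1, 𝔑)}. -/

import Mathlib

open MvPolynomial

noncomputable def mdeg {σ : Type*} (m : MonomialOrder σ) {K : Type*} [CommSemiring K]
    (f : MvPolynomial σ K) : σ →₀ ℕ :=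
  m.toSyn.symm (f.support.sup fun d => m.toSyn d)

noncomputable def plc {σ : Type*} (m : MonomialOrder σ) {K : Type*} [CommSemiring K]
    (f : MvPolynomial σ K) : K :=
  f.coeff (mdeg m f)

/-- One step reduction of `(f, 𝔣)` to `(h, 𝔣)` with respect to the family of
pseudo-polynomials `(gᵢ, 𝔤ᵢ)`: there are `aᵢ ∈ 𝔤ᵢ 𝔣⁻¹`, supported on the set
`J = {i : LM(gᵢ) ∣ LM(f)}`, with `LC(f) = ∑ aᵢ LC(gᵢ)` and
`h = f - ∑ aᵢ x^{deg f - deg gᵢ} gᵢ`. -/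
def OneStep {R : Type*} [CommRing R] [IsDomain R] [IsDedekindDomain R] {n l : ℕ}
    (m : MonomialOrder (Fin n))
    (g : Fin l → MvPolynomial (Fin n) (FractionRing R))
    (𝔤 : Fin l → FractionalIdeal (nonZeroDivisors R) (FractionRing R))
    (𝔣 : FractionalIdeal (nonZeroDivisors R) (FractionRing R))
    (f h : MvPolynomial (Fin n) (FractionRing R)) : Prop :=
  ∃ a : Fin l → FractionRing R,
    (∀ i, a i ∈ 𝔤 i * 𝔣⁻¹) ∧
    (∀ i, a i ≠ 0 → ∃ γ, mdeg m f = mdeg m (g i) + γ) ∧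
    plc m f = ∑ i, a i * plc m (g i) ∧
    h = f - ∑ i, (monomial (mdeg m f - mdeg m (g i)) (a i)) * g i

/-! The leading term of `(f, 𝔣)` is stripped one step at a time, keeping the invariant
that either `f ≡ g` coefficientwise modulo `𝔑𝔣⁻¹` with `supp g ⊆ supp f`, or `f ≡ 0`.
In the first case, if the leading monomial `D` of `f` lies in `supp g`, then `deg g = D`
and the coefficients `(1, c_D - ḡ_D)` remove `g` together with the leading term, which
lands in the second case; if `D ∉ supp g`, then `c_D ∈ 𝔑𝔣⁻¹` and `(1, 𝔑)` alone removes
the leading term. Each step shrinks the support, so the process ends at `0`. -/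

open scoped Finset

theorem Relation.reflTransGen_of_exists_step_lt {α : Type*} {r : α → α → Prop} {P : α → Prop}
    (μ : α → ℕ) {a₀ : α} (step : ∀ a, P a → a ≠ a₀ → ∃ b, P b ∧ r a b ∧ μ b < μ a)
    {a : α} (ha : P a) : Relation.ReflTransGen r a a₀ := by
  induction a using (measure μ).wf.induction with
  | h a ih =>
    by_cases h : a = a₀
    · exact h ▸ .refl
    obtain ⟨b, hb, hab, hlt⟩ := step a ha h
    exact .head hab (ih b hlt hb)

section

variable {σ K : Type*} [CommSemiring K] (m : MonomialOrder σ)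

theorem mdeg_eq_degree (f : MvPolynomial σ K) : mdeg m f = m.degree f := rfl

theorem plc_eq_leadingCoeff (f : MvPolynomial σ K) : plc m f = m.leadingCoeff f := rfl

end

section

variable {σ K : Type*} [DecidableEq σ] [CommRing K] (p : MvPolynomial σ K) (D : σ →₀ ℕ)

theorem coeff_sub_monomial_coeff (d : σ →₀ ℕ) :
    (p - monomial D (p.coeff D)).coeff d = if d = D then 0 else p.coeff d := by
  by_cases h : d = D
  · simp [h]
  · simp [coeff_monomial, h, Ne.symm h]

theorem support_sub_monomial_coeff :
    (p - monomial D (p.coeff D)).support = p.support.erase D := by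
  ext d
  rw [mem_support_iff, coeff_sub_monomial_coeff, Finset.mem_erase, mem_support_iff]
  split_ifs with h <;> simp [h]

theorem coeff_sub_monomial_coeff_mem {I : Set K} (hI : 0 ∈ I) (hp : ∀ d, p.coeff d ∈ I)
    (d : σ →₀ ℕ) : (p - monomial D (p.coeff D)).coeff d ∈ I := by
  rw [coeff_sub_monomial_coeff]
  split_ifs
  exacts [hI, hp d]

end

theorem MonomialOrder.degree_eq_of_support_subset {σ K : Type*} [CommSemiring K]
    (m : MonomialOrder σ) {f g : MvPolynomial σ K} (hsupp : g.support ⊆ f.support)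
    (hD : m.degree f ∈ g.support) : m.degree g = m.degree f := by
  have hg : g ≠ 0 := ne_zero_iff.mpr ⟨_, mem_support_iff.mp hD⟩
  exact m.toSyn.injective <|
    le_antisymm (m.le_degree (hsupp (m.degree_mem_support hg))) (m.le_degree hD)

section

variable {R : Type*} [CommRing R] [IsDedekindDomain R] {n : ℕ}
  (m : MonomialOrder (Fin n)) {f g : MvPolynomial (Fin n) (FractionRing R)}
  {𝔣 𝔑 : FractionalIdeal (nonZeroDivisors R) (FractionRing R)}

theorem oneStep_sub_monomial (hc : f.coeff (mdeg m f) ∈ 𝔑 * 𝔣⁻¹) :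
    OneStep m ![g, 1] ![𝔣, 𝔑] 𝔣 f (f - monomial (mdeg m f) (f.coeff (mdeg m f))) := by
  refine ⟨![0, f.coeff (mdeg m f)], ?_, ?_, ?_, ?_⟩ <;>
    simp only [Fin.forall_fin_two, Fin.sum_univ_two, Matrix.cons_val_zero, Matrix.cons_val_one,
      mdeg_eq_degree, plc_eq_leadingCoeff, m.degree_one, m.leadingCoeff_one]
  · exact ⟨by simpa using FractionalIdeal.zero_mem _, hc⟩
  · exact ⟨by simp, fun _ => ⟨m.degree f, by simp⟩⟩
  · simp [MonomialOrder.leadingCoeff]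
  · simp

theorem oneStep_sub_sub_monomial (h𝔣 : 𝔣 ≠ 0) (hsupp : g.support ⊆ f.support)
    (hD : mdeg m f ∈ g.support) (hc : (f - g).coeff (mdeg m f) ∈ 𝔑 * 𝔣⁻¹) :
    OneStep m ![g, 1] ![𝔣, 𝔑] 𝔣 f
      (f - g - monomial (mdeg m f) ((f - g).coeff (mdeg m f))) := by
  have hdeg := m.degree_eq_of_support_subset hsupp hD
  refine ⟨![1, (f - g).coeff (mdeg m f)], ?_, ?_, ?_, ?_⟩ <;>
    simp only [Fin.forall_fin_two, Fin.sum_univ_two, Matrix.cons_val_zero, Matrix.cons_val_one,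
      mdeg_eq_degree, plc_eq_leadingCoeff, m.degree_one, m.leadingCoeff_one, hdeg]
  · exact ⟨by simp [mul_inv_cancel₀ h𝔣], hc⟩
  · exact ⟨fun _ => ⟨0, by simp⟩, fun _ => ⟨m.degree f, by simp⟩⟩
  · simp [MonomialOrder.leadingCoeff, hdeg]
  · simp only [tsub_self, tsub_zero, monomial_zero', C_1, one_mul, mul_one]
    ring

theorem exists_oneStep_card_support_lt (h𝔣 : 𝔣 ≠ 0) (hf : f ≠ 0)
    (hinv : (g.support ⊆ f.support ∧ ∀ d, (f - g).coeff d ∈ 𝔑 * 𝔣⁻¹) ∨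
      ∀ d, f.coeff d ∈ 𝔑 * 𝔣⁻¹) :
    ∃ h, ((g.support ⊆ h.support ∧ ∀ d, (h - g).coeff d ∈ 𝔑 * 𝔣⁻¹) ∨
      ∀ d, h.coeff d ∈ 𝔑 * 𝔣⁻¹) ∧
      OneStep m ![g, 1] ![𝔣, 𝔑] 𝔣 f h ∧ #h.support < #f.support := by
  classical
  set D := mdeg m f
  have hDf : D ∈ f.support := m.degree_mem_support hf
  have hI : (0 : FractionRing R) ∈ 𝔑 * 𝔣⁻¹ := FractionalIdeal.zero_mem _
  rcases hinv with ⟨hsupp, hdiff⟩ | hall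
  · by_cases hgD : D ∈ g.support
    · refine ⟨f - g - monomial D ((f - g).coeff D),
        .inr (coeff_sub_monomial_coeff_mem _ _ hI hdiff),
        oneStep_sub_sub_monomial m h𝔣 hsupp hgD (hdiff D), ?_⟩
      have hfg : (f - g).support ⊆ f.support :=
        (support_sub _ f g).trans (Finset.union_subset subset_rfl hsupp)
      rw [support_sub_monomial_coeff]
      exact (Finset.card_le_card (Finset.erase_subset_erase D hfg)).trans_lt
        (Finset.card_erase_lt_of_mem hDf)
    · have hgD0 : g.coeff D = 0 := notMem_support_iff.mp hgD
      have hcoeff : f.coeff D ∈ 𝔑 * 𝔣⁻¹ := by simpa [hgD0] using hdiff D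
      have hsub : f - monomial D (f.coeff D) - g = f - g - monomial D ((f - g).coeff D) := by
        rw [coeff_sub, hgD0, sub_zero]
        ring
      refine ⟨f - monomial D (f.coeff D),
        .inl ⟨?_, hsub ▸ coeff_sub_monomial_coeff_mem _ _ hI hdiff⟩,
        oneStep_sub_monomial m hcoeff, ?_⟩ <;> rw [support_sub_monomial_coeff]
      · exact fun d hd => Finset.mem_erase.mpr ⟨fun h => hgD (h ▸ hd), hsupp hd⟩
      · exact Finset.card_erase_lt_of_mem hDf
  · refine ⟨f - monomial D (f.coeff D), .inr (coeff_sub_monomial_coeff_mem _ _ hI hall),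
      oneStep_sub_monomial m (hall D), ?_⟩
    rw [support_sub_monomial_coeff]
    exact Finset.card_erase_lt_of_mem hDf

end

theorem stmt19_general {R : Type*} [CommRing R] [IsDedekindDomain R] {n : ℕ}
    (m : MonomialOrder (Fin n))
    (f g : MvPolynomial (Fin n) (FractionRing R))
    (𝔣 𝔑 : FractionalIdeal (nonZeroDivisors R) (FractionRing R))
    (h𝔣 : 𝔣 ≠ 0)
    (hgsupp : g.support ⊆ f.support)
    (hdiff : ∀ d, f.coeff d - g.coeff d ∈ 𝔑 * 𝔣⁻¹) :
    Relation.ReflTransGen (OneStep m ![g, 1] ![𝔣, 𝔑] 𝔣) f 0 :=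
  Relation.reflTransGen_of_exists_step_lt (fun p => #p.support)
    (fun _ hinv hp => exists_oneStep_card_support_lt (g := g) (𝔑 := 𝔑) m h𝔣 hp hinv)
    (Or.inl ⟨hgsupp, by simpa using hdiff⟩)

/-- Let `R` be a Dedekind domain, `(f, 𝔣)` a nonzero pseudo-polynomial,
`g ∈ R[x]` a polynomial supported on the monomials of `f`, and `𝔑` a fractional ideal
with `coeff(f) − coeff(g) ∈ 𝔑𝔣⁻¹` coefficientwise. Then `(f, 𝔣)` reduces to `0`
modulo `{(g, 𝔣), (1, 𝔑)}`. -/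
theorem stmt19 {R : Type*} [CommRing R] [IsDomain R] [IsDedekindDomain R] {n : ℕ}
    (m : MonomialOrder (Fin n))
    (f g : MvPolynomial (Fin n) (FractionRing R))
    (𝔣 𝔑 : FractionalIdeal (nonZeroDivisors R) (FractionRing R))
    (hf : f ≠ 0) (h𝔣 : 𝔣 ≠ 0) (h𝔑 : 𝔑 ≠ 0)
    (hpf : ∀ c ∈ 𝔣, ∀ d, c * f.coeff d ∈
      (1 : FractionalIdeal (nonZeroDivisors R) (FractionRing R)))
    (hgsupp : g.support ⊆ f.support)
    (hgR : ∀ d, g.coeff d ∈ (1 : FractionalIdeal (nonZeroDivisors R) (FractionRing R)))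
    (hdiff : ∀ d, f.coeff d - g.coeff d ∈ 𝔑 * 𝔣⁻¹) :
    Relation.ReflTransGen (OneStep m ![g, 1] ![𝔣, 𝔑] 𝔣) f 0 :=
  stmt19_general m f g 𝔣 𝔑 h𝔣 hgsupp hdiff
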